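/- arXiv:2205.14775 — 7 statements merged into one kernel-verified Lean document; each statement's English description precedes it below -/
import Mathlib

section
/- For symmetric positive semi-definite matrices A, B with A ⪰ B ⪰ 0 and A invertible, Tr(A^{-1}(A - B)) ≤ log det A - log det B. -/
open Matrix Finset
open scoped MatrixOrder

lemma trace_eq_sum_eigenvalues {n : ℕ} {C : Matrix (Fin n) (Fin n) ℝ}
    (hC : C.IsHermitian) : C.trace = ∑ i, hC.eigenvalues i := by
  conv_lhs => rw [hC.spectral_theorem]
  rw [Unitary.conjStarAlgAut_apply, trace_mul_cycle, (Matrix.mem_unitaryGroup_iff').mp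
    (hC.eigenvectorUnitary).2, one_mul, trace_diagonal]
  simp

lemma posDef_conj {n : ℕ} {B S : Matrix (Fin n) (Fin n) ℝ}
    (hB : B.PosDef) (hS : S.IsHermitian) (hSu : IsUnit S) : (S * B * S).PosDef := by
  refine PosDef.of_dotProduct_mulVec_pos ?_ ?_
  · have := isHermitian_conjTranspose_mul_mul (A := B) S hB.1
    rwa [hS.eq] at this
  · intro x hx
    have hSx : S *ᵥ x ≠ 0 := by
      haveI := hSu.invertible
      intro h
      exact hx (Matrix.mulVec_injective_of_invertible S
        (h.trans (Matrix.mulVec_zero S).symm))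
    have := hB.dotProduct_mulVec_pos hSx
    simpa only [star_mulVec, dotProduct_mulVec, vecMul_vecMul, hS.eq] using this

theorem stmt1 {n : ℕ} (A B : Matrix (Fin n) (Fin n) ℝ)
    (hA : A.PosDef) (hB : B.PosDef) (hAB : (A - B).PosSemidef) :
    (A⁻¹ * (A - B)).trace ≤ Real.log A.det - Real.log B.det := by
  have hAi : (A⁻¹).PosDef := hA.inv
  set S := CFC.sqrt A⁻¹ with hSdef
  have hSS : S * S = A⁻¹ := CFC.sqrt_mul_sqrt_self _ hAi.posSemidef.nonneg
  have hSherm : S.IsHermitian := (CFC.sqrt_nonneg _).posSemidef.1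
  have hdetS : S.det * S.det = (A⁻¹).det := by rw [← det_mul, hSS]
  have hdetAi : 0 < (A⁻¹).det := hAi.det_pos
  have hSu : IsUnit S := by
    apply (Matrix.isUnit_iff_isUnit_det S).mpr
    refine isUnit_iff_ne_zero.mpr ?_
    intro h
    rw [h, mul_zero] at hdetS
    exact hdetAi.ne hdetS
  set C := S * B * S with hCdef
  have hC : C.PosDef := posDef_conj hB hSherm hSu
  -- trace identity
  have htr : (A⁻¹ * (A - B)).trace = (n : ℝ) - C.trace := by
    have h1 : A⁻¹ * (A - B) = 1 - A⁻¹ * B := by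
      rw [Matrix.mul_sub, Matrix.nonsing_inv_mul A hA.det_pos.ne'.isUnit]
    rw [h1, trace_sub, trace_one, Fintype.card_fin]
    congr 1
    rw [hCdef, ← hSS, Matrix.mul_assoc, trace_mul_comm]
  -- det identity
  have hdet : C.det = B.det / A.det := by
    rw [hCdef, det_mul, det_mul, mul_comm S.det B.det, mul_assoc, hdetS,
      Matrix.det_nonsing_inv, Ring.inverse_eq_inv]
    field_simp
  have hrhs : Real.log A.det - Real.log B.det = - Real.log C.det := by
    rw [hdet, Real.log_div hB.det_pos.ne' hA.det_pos.ne']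
    ring
  rw [htr, hrhs]
  -- eigenvalue decomposition of C
  have hμpos : ∀ i, 0 < hC.1.eigenvalues i := hC.eigenvalues_pos
  have htrC : C.trace = ∑ i, hC.1.eigenvalues i := trace_eq_sum_eigenvalues hC.1
  have hdetC : C.det = ∏ i, hC.1.eigenvalues i := by
    have := hC.1.det_eq_prod_eigenvalues
    simpa using this
  rw [htrC, hdetC, Real.log_prod (fun i _ => (hμpos i).ne')]
  have hcard : (n : ℝ) = ∑ _i : Fin n, (1 : ℝ) := by simp
  rw [hcard, ← Finset.sum_sub_distrib, ← Finset.sum_neg_distrib]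
  apply Finset.sum_le_sum
  intro i _
  have := Real.log_le_sub_one_of_pos (hμpos i)
  linarith
end

section
/- Let X be a finite set of vectors in R^d all with Euclidean norm at most 1, let σ, T > 0, and for a probability distribution P on X define S(P) = Σ_{x∈X} P(x) x xᵀ + (σ/T) I_d. Then for every probability distribution P on X: log det((T/σ) Σ_x P(x) x xᵀ + I_d) ≤ d log(T/(σ d) + 1). -/
open Matrix Finset Real

lemma psd_vecMulVec {d : ℕ} (x : Fin d → ℝ) : (Matrix.vecMulVec x x).PosSemidef := by
  rw [Matrix.vecMulVec_eq Unit]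
  have h : Matrix.replicateCol Unit x = (Matrix.replicateRow Unit x)ᴴ := by
    ext i j; simp [Matrix.conjTranspose_apply]
  rw [h]
  exact Matrix.posSemidef_conjTranspose_mul_self _

lemma psd_smul {d : ℕ} {A : Matrix (Fin d) (Fin d) ℝ} (hA : A.PosSemidef) {c : ℝ}
    (hc : 0 ≤ c) : (c • A).PosSemidef := by
  refine ⟨?_, fun v => ?_⟩
  · ext i j
    simp only [Matrix.conjTranspose_apply, Matrix.smul_apply, star_trivial, smul_eq_mul]
    have h := hA.1.apply i j
    rw [star_trivial] at h
    rw [h]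
  · exact (hA.smul hc).2 v

theorem stmt2 {d : ℕ} (hd : 0 < d) (X : Finset (Fin d → ℝ))
    (hX : ∀ x ∈ X, ∑ i, (x i) ^ 2 ≤ 1)
    (σ T : ℝ) (hσ : 0 < σ) (hT : 0 < T)
    (P : (Fin d → ℝ) → ℝ) (hP : ∀ x, 0 ≤ P x) (hPsum : ∑ x ∈ X, P x = 1) :
    Real.log ((T / σ) • (∑ x ∈ X, P x • Matrix.vecMulVec x x)
        + (1 : Matrix (Fin d) (Fin d) ℝ)).det
      ≤ d * Real.log (T / (σ * d) + 1) := by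
  classical
  set M : Matrix (Fin d) (Fin d) ℝ := (T / σ) • (∑ x ∈ X, P x • Matrix.vecMulVec x x) with hMdef
  have hsum_psd : (∑ x ∈ X, P x • Matrix.vecMulVec x x).PosSemidef := by
    refine Finset.sum_induction _ _ (fun a b ha hb => ha.add hb) Matrix.PosSemidef.zero ?_
    intro x hx
    exact psd_smul (psd_vecMulVec x) (hP x)
  have hMps : M.PosSemidef := psd_smul hsum_psd (div_nonneg hT.le hσ.le)
  have hA : (M + 1).PosDef := Matrix.PosDef.posSemidef_add hMps Matrix.PosDef.one
  set H : (M + 1).IsHermitian := hA.1 with hH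
  set e : Fin d → ℝ := H.eigenvalues with he
  have hepos : ∀ i, 0 < e i := hA.eigenvalues_pos
  -- det = product of eigenvalues
  have hdet : (M + 1).det = ∏ i, e i := by
    simpa using H.det_eq_prod_eigenvalues
  -- trace = sum of eigenvalues
  have htr : (M + 1).trace = ∑ i, e i := by
    nth_rewrite 1 [H.spectral_theorem]
    rw [Unitary.conjStarAlgAut_apply, Matrix.trace_mul_cycle]
    rw [(Matrix.mem_unitaryGroup_iff').mp H.eigenvectorUnitary.2, Matrix.one_mul,
      Matrix.trace_diagonal]
    simp; rfl
  -- trace bound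
  have htrM : M.trace ≤ T / σ := by
    rw [hMdef, Matrix.trace_smul, Matrix.trace_sum]
    have h1 : ∑ x ∈ X, (P x • Matrix.vecMulVec x x).trace ≤ 1 := by
      rw [← hPsum]
      refine Finset.sum_le_sum fun x hx => ?_
      rw [Matrix.trace_smul]
      have : (Matrix.vecMulVec x x).trace ≤ 1 := by
        simpa [Matrix.trace, Matrix.diag, Matrix.vecMulVec_apply, sq] using hX x hx
      calc P x • (Matrix.vecMulVec x x).trace ≤ P x • 1 := by
            exact smul_le_smul_of_nonneg_left this (hP x)
        _ = P x := by simp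
    calc (T / σ) • ∑ x ∈ X, (P x • Matrix.vecMulVec x x).trace
        ≤ (T / σ) • (1 : ℝ) := smul_le_smul_of_nonneg_left h1 (div_nonneg hT.le hσ.le)
      _ = T / σ := by simp
  have htre : ∑ i, e i ≤ T / σ + d := by
    rw [← htr]
    have : (M + 1 : Matrix (Fin d) (Fin d) ℝ).trace = M.trace + d := by
      rw [Matrix.trace_add, Matrix.trace_one]; simp
    rw [this]
    linarith
  -- Jensen
  have hd' : (0 : ℝ) < d := by exact_mod_cast hd
  have hjensen : ∑ i, (1 / (d : ℝ)) * Real.log (e i) ≤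
      Real.log (∑ i : Fin d, (1 / (d : ℝ)) * e i) := by
    have := strictConcaveOn_log_Ioi.concaveOn.le_map_sum
      (t := Finset.univ) (w := fun _ : Fin d => 1 / (d : ℝ)) (p := e)
      (fun i _ => by positivity)
      (by simp [Finset.card_univ]; field_simp)
      (fun i _ => Set.mem_Ioi.mpr (hepos i))
    simpa [smul_eq_mul] using this
  have hlogdet : Real.log (M + 1).det = ∑ i, Real.log (e i) := by
    rw [hdet, Real.log_prod (fun i _ => (hepos i).ne')]
  have : Nonempty (Fin d) := Fin.pos_iff_nonempty.mp hd
  have hsumpos : 0 < ∑ i, e i := Finset.sum_pos (fun i _ => hepos i) Finset.univ_nonempty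
  have key : Real.log (M + 1).det ≤ d * Real.log ((∑ i, e i) / d) := by
    rw [hlogdet]
    have h2 : ∑ i : Fin d, (1 / (d : ℝ)) * e i = (∑ i, e i) / d := by
      rw [Finset.sum_div]; exact Finset.sum_congr rfl fun i _ => by ring
    calc ∑ i, Real.log (e i) = d * ∑ i, (1 / (d : ℝ)) * Real.log (e i) := by
          rw [Finset.mul_sum]; congr 1; ext i; field_simp
      _ ≤ d * Real.log ((∑ i, e i) / d) := by
          rw [← h2]; exact mul_le_mul_of_nonneg_left hjensen hd'.le
  refine key.trans ?_
  refine mul_le_mul_of_nonneg_left ?_ hd'.le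
  refine Real.log_le_log (by positivity) ?_
  rw [div_le_iff₀ hd']
  have : T / (σ * d) + 1 = (T / σ + d) / d := by field_simp
  rw [this, div_mul_cancel₀ _ hd'.ne']
  exact htre
end

section
/- Let π* maximize P ↦ log det S(P, λ) over probability distributions P on a finite set A of feature vectors in R^N, where S(P,λ) = Σ_{x∈A} P(x) φ(x)φ(x)ᵀ + λ I. Then for every x ∈ A: ‖φ(x)‖²_{S(π*,λ)^{-1}} ≤ max_{P} Σ_{x'} P(x') ‖φ(x')‖²_{S(P,λ)^{-1}}, and in particular ‖φ(x)‖²_{S(π*,λ)^{-1}} ≤ γ where γ := max_P log det S((T/σ)P, 1) (with λ = σ/T), uniformly over x ∈ A. -/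
open Matrix

/-- Regularized design matrix `S(P, λ) = ∑ₓ P(x) φ(x)φ(x)ᵀ + λ I`. -/
noncomputable def designMat {α : Type*} [Fintype α] {N : ℕ} (φ : α → Fin N → ℝ)
    (P : α → ℝ) (lam : ℝ) : Matrix (Fin N) (Fin N) ℝ :=
  ∑ x, P x • Matrix.vecMulVec (φ x) (φ x) + lam • 1

namespace Stmt4Aux
open Polynomial

variable {N : ℕ} {α : Type*} [Fintype α]

lemma vecMulVec_mulVec (v x : Fin N → ℝ) : (Matrix.vecMulVec v v) *ᵥ x = (v ⬝ᵥ x) • v := by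
  ext i
  simp only [Matrix.mulVec, Matrix.vecMulVec_apply, dotProduct, Pi.smul_apply, smul_eq_mul,
    Finset.sum_mul]
  exact Finset.sum_congr rfl fun j _ => by ring

lemma vecMulVec_posSemidef (v : Fin N → ℝ) : (Matrix.vecMulVec v v).PosSemidef := by
  rw [Matrix.posSemidef_iff_dotProduct_mulVec]
  constructor
  · ext i j
    simp [Matrix.vecMulVec_apply, Matrix.conjTranspose_apply, mul_comm]
  · intro x
    rw [vecMulVec_mulVec]
    simp only [star_trivial, dotProduct_smul, smul_eq_mul]
    rw [dotProduct_comm]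
    exact mul_self_nonneg _

lemma posSemidef_smul {M : Matrix (Fin N) (Fin N) ℝ} (hM : M.PosSemidef) {c : ℝ} (hc : 0 ≤ c) :
    (c • M).PosSemidef := by
  rw [Matrix.posSemidef_iff_dotProduct_mulVec] at hM ⊢
  refine ⟨?_, fun x => ?_⟩
  · unfold Matrix.IsHermitian
    rw [Matrix.conjTranspose_smul, hM.1]
    simp
  · rw [Matrix.smul_mulVec, dotProduct_smul, smul_eq_mul]
    exact mul_nonneg hc (hM.2 x)

lemma trace_mul_vecMulVec (A : Matrix (Fin N) (Fin N) ℝ) (u : Fin N → ℝ) :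
    (A * Matrix.vecMulVec u u).trace = u ⬝ᵥ (A *ᵥ u) := by
  simp only [Matrix.trace, Matrix.diag, Matrix.mul_apply, Matrix.vecMulVec_apply,
    dotProduct, Matrix.mulVec, Finset.mul_sum]
  exact Finset.sum_congr rfl fun i _ => Finset.sum_congr rfl fun j _ => by ring

lemma trace_vecMulVec (v : Fin N → ℝ) : (Matrix.vecMulVec v v).trace = v ⬝ᵥ v := by
  simp [Matrix.trace, Matrix.diag, Matrix.vecMulVec_apply, dotProduct]

lemma posSemidef_trace_nonneg {M : Matrix (Fin N) (Fin N) ℝ} (hM : M.PosSemidef) :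
    0 ≤ M.trace := by
  refine Finset.sum_nonneg fun i _ => ?_
  have := (Matrix.posSemidef_iff_dotProduct_mulVec.mp hM).2 (Pi.single i 1)
  simpa using this

omit [Fintype α] in
lemma sum_posSemidef {s : Finset α} {f : α → Matrix (Fin N) (Fin N) ℝ}
    (h : ∀ x ∈ s, (f x).PosSemidef) : (∑ x ∈ s, f x).PosSemidef := by
  classical
  induction s using Finset.induction_on with
  | empty => simpa using Matrix.PosSemidef.zero
  | insert _ _ hx ih =>
    rw [Finset.sum_insert hx]
    exact (h _ (Finset.mem_insert_self _ _)).add (ih fun x hxs => h x (Finset.mem_insert_of_mem hxs))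

lemma smul_one_posDef {lam : ℝ} (hlam : 0 < lam) :
    (lam • (1 : Matrix (Fin N) (Fin N) ℝ)).PosDef := by
  rw [Matrix.posDef_iff_dotProduct_mulVec]
  refine ⟨?_, fun x hx => ?_⟩
  · unfold Matrix.IsHermitian
    rw [Matrix.conjTranspose_smul, Matrix.conjTranspose_one]
    simp
  · rw [Matrix.smul_mulVec, dotProduct_smul, Matrix.one_mulVec, smul_eq_mul]
    refine mul_pos hlam ?_
    simpa using dotProduct_star_self_pos_iff.mpr hx

lemma designMat_posDef (φ : α → Fin N → ℝ) {P : α → ℝ} {lam : ℝ}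
    (hP : ∀ x, 0 ≤ P x) (hlam : 0 < lam) : (designMat φ P lam).PosDef := by
  unfold designMat
  rw [add_comm]
  exact (smul_one_posDef hlam).add_posSemidef
    (sum_posSemidef fun x _ => posSemidef_smul (vecMulVec_posSemidef _) (hP x))

/-! ### Spectral lemmas -/

lemma trace_eq_sum_eigs {A : Matrix (Fin N) (Fin N) ℝ} (hA : A.IsHermitian) :
    A.trace = ∑ i, hA.eigenvalues i := by
  conv_lhs => rw [hA.spectral_theorem, Unitary.conjStarAlgAut_apply]
  rw [Matrix.trace_mul_comm, ← Matrix.mul_assoc,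
    Matrix.mem_unitaryGroup_iff'.mp (hA.eigenvectorUnitary).2, one_mul]
  simp [Matrix.trace_diagonal]

lemma inv_eq_spectral {A : Matrix (Fin N) (Fin N) ℝ} (hPD : A.PosDef) :
    A⁻¹ = (hPD.1.eigenvectorUnitary : Matrix (Fin N) (Fin N) ℝ) *
      Matrix.diagonal (fun i => (hPD.1.eigenvalues i)⁻¹) *
      (star (hPD.1.eigenvectorUnitary : Matrix (Fin N) (Fin N) ℝ)) := by
  apply Matrix.inv_eq_right_inv
  have hstep : A * ((hPD.1.eigenvectorUnitary : Matrix (Fin N) (Fin N) ℝ) *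
      Matrix.diagonal (fun i => (hPD.1.eigenvalues i)⁻¹) *
      (star (hPD.1.eigenvectorUnitary : Matrix (Fin N) (Fin N) ℝ))) =
      ((hPD.1.eigenvectorUnitary : Matrix (Fin N) (Fin N) ℝ) *
      Matrix.diagonal (RCLike.ofReal ∘ hPD.1.eigenvalues) *
      (star (hPD.1.eigenvectorUnitary : Matrix (Fin N) (Fin N) ℝ))) *
      ((hPD.1.eigenvectorUnitary : Matrix (Fin N) (Fin N) ℝ) *
      Matrix.diagonal (fun i => (hPD.1.eigenvalues i)⁻¹) *
      (star (hPD.1.eigenvectorUnitary : Matrix (Fin N) (Fin N) ℝ))) := by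
    exact congrArg (fun B => B * _) hPD.1.spectral_theorem
  rw [hstep]
  have hUU' : star (hPD.1.eigenvectorUnitary : Matrix (Fin N) (Fin N) ℝ) *
      (hPD.1.eigenvectorUnitary : Matrix (Fin N) (Fin N) ℝ) = 1 :=
    Matrix.mem_unitaryGroup_iff'.mp (hPD.1.eigenvectorUnitary).2
  have hUU : (hPD.1.eigenvectorUnitary : Matrix (Fin N) (Fin N) ℝ) *
      star (hPD.1.eigenvectorUnitary : Matrix (Fin N) (Fin N) ℝ) = 1 :=
    Matrix.mem_unitaryGroup_iff.mp (hPD.1.eigenvectorUnitary).2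
  have h1 : Matrix.diagonal (RCLike.ofReal ∘ hPD.1.eigenvalues) *
      Matrix.diagonal (fun i => (hPD.1.eigenvalues i)⁻¹) = (1 : Matrix (Fin N) (Fin N) ℝ) := by
    rw [Matrix.diagonal_mul_diagonal]
    have hfun : (fun i => (RCLike.ofReal ∘ hPD.1.eigenvalues) i * (hPD.1.eigenvalues i)⁻¹) =
        fun _ => (1:ℝ) := by
      funext i
      have := hPD.eigenvalues_pos i
      simp [RCLike.ofReal_real_eq_id, mul_inv_cancel₀ this.ne']
    rw [hfun, Matrix.diagonal_one]
  simp only [Matrix.mul_assoc]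
  rw [← Matrix.mul_assoc (star (hPD.1.eigenvectorUnitary : Matrix (Fin N) (Fin N) ℝ))
    (hPD.1.eigenvectorUnitary : Matrix (Fin N) (Fin N) ℝ), hUU', one_mul,
    ← Matrix.mul_assoc (Matrix.diagonal _) (Matrix.diagonal _), h1, one_mul, hUU]

lemma trace_inv_eq_sum_inv_eigs {A : Matrix (Fin N) (Fin N) ℝ} (hPD : A.PosDef) :
    (A⁻¹).trace = ∑ i, (hPD.1.eigenvalues i)⁻¹ := by
  rw [inv_eq_spectral hPD, Matrix.trace_mul_comm, ← Matrix.mul_assoc,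
    Matrix.mem_unitaryGroup_iff'.mp (hPD.1.eigenvectorUnitary).2, one_mul, Matrix.trace_diagonal]

lemma log_det_le_trace_sub {A : Matrix (Fin N) (Fin N) ℝ} (hPD : A.PosDef) :
    Real.log A.det ≤ A.trace - N := by
  rw [hPD.1.det_eq_prod_eigenvalues, trace_eq_sum_eigs hPD.1]
  simp only [RCLike.ofReal_real_eq_id, id]
  rw [Real.log_prod (fun i _ => (hPD.eigenvalues_pos i).ne')]
  have h : ∀ i ∈ Finset.univ, Real.log (hPD.1.eigenvalues i) ≤ hPD.1.eigenvalues i - 1 :=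
    fun i _ => Real.log_le_sub_one_of_pos (hPD.eigenvalues_pos i)
  calc ∑ i, Real.log (hPD.1.eigenvalues i) ≤ ∑ i, (hPD.1.eigenvalues i - 1) :=
        Finset.sum_le_sum h
    _ = (∑ i, hPD.1.eigenvalues i) - N := by simp [Finset.sum_sub_distrib]

lemma card_sub_trace_inv_le_log_det {A : Matrix (Fin N) (Fin N) ℝ} (hPD : A.PosDef) :
    (N : ℝ) - (A⁻¹).trace ≤ Real.log A.det := by
  rw [hPD.1.det_eq_prod_eigenvalues, trace_inv_eq_sum_inv_eigs hPD]
  simp only [RCLike.ofReal_real_eq_id, id]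
  rw [Real.log_prod (fun i _ => (hPD.eigenvalues_pos i).ne')]
  have h : ∀ i ∈ Finset.univ, 1 - (hPD.1.eigenvalues i)⁻¹ ≤ Real.log (hPD.1.eigenvalues i) := by
    intro i _
    have hp := hPD.eigenvalues_pos i
    have h2 := Real.log_le_sub_one_of_pos (inv_pos.mpr hp)
    rw [Real.log_inv] at h2
    linarith
  calc (N : ℝ) - ∑ i, (hPD.1.eigenvalues i)⁻¹ = ∑ i : Fin N, (1 - (hPD.1.eigenvalues i)⁻¹) := by
        simp [Finset.sum_sub_distrib]
    _ ≤ ∑ i, Real.log (hPD.1.eigenvalues i) := Finset.sum_le_sum h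

/-! ### designMat computations -/

lemma designMat_sub (φ : α → Fin N → ℝ) (P : α → ℝ) (lam : ℝ) :
    designMat φ P lam - lam • 1 = ∑ x, P x • Matrix.vecMulVec (φ x) (φ x) := by
  unfold designMat
  abel

lemma sum_mul_quad (φ : α → Fin N → ℝ) {P : α → ℝ} {lam : ℝ}
    (hP : ∀ x, 0 ≤ P x) (hlam : 0 < lam) :
    ∑ x, P x * (φ x ⬝ᵥ ((designMat φ P lam)⁻¹ *ᵥ φ x))
      = (N : ℝ) - lam * ((designMat φ P lam)⁻¹).trace := by
  set S := designMat φ P lam with hS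
  have hPD := designMat_posDef φ hP hlam
  have hinv : S⁻¹ * S = 1 := Matrix.nonsing_inv_mul _ (isUnit_iff_ne_zero.mpr hPD.det_pos.ne')
  have key : S⁻¹ * (S - lam • 1) = ∑ x, P x • (S⁻¹ * Matrix.vecMulVec (φ x) (φ x)) := by
    rw [hS, designMat_sub, Finset.mul_sum]
    exact Finset.sum_congr rfl fun x _ => (mul_smul_comm _ _ _)
  have h1 : (S⁻¹ * (S - lam • 1)).trace = ∑ x, P x * (φ x ⬝ᵥ (S⁻¹ *ᵥ φ x)) := by
    rw [key, Matrix.trace_sum]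
    exact Finset.sum_congr rfl fun x _ => by
      rw [Matrix.trace_smul, trace_mul_vecMulVec, smul_eq_mul]
  have h2 : (S⁻¹ * (S - lam • 1)).trace = (N : ℝ) - lam * (S⁻¹).trace := by
    rw [mul_sub, hinv, mul_smul_comm, mul_one, Matrix.trace_sub, Matrix.trace_smul,
      Matrix.trace_one, smul_eq_mul]
    simp
  rw [← h1, h2]

lemma designMat_scaled (φ : α → Fin N → ℝ) (P : α → ℝ) {lam : ℝ} (hlam : 0 < lam) :
    designMat φ (fun x => lam⁻¹ * P x) 1 = lam⁻¹ • designMat φ P lam := by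
  unfold designMat
  rw [smul_add, Finset.smul_sum, smul_smul, inv_mul_cancel₀ hlam.ne', one_smul]
  congr 1
  exact Finset.sum_congr rfl fun x _ => by rw [smul_smul]

lemma trace_designMat (φ : α → Fin N → ℝ) (w : α → ℝ) (lam : ℝ) :
    (designMat φ w lam).trace = (∑ x, w x * (φ x ⬝ᵥ φ x)) + lam * N := by
  unfold designMat
  rw [Matrix.trace_add, Matrix.trace_sum, Matrix.trace_smul, Matrix.trace_one]
  simp only [Matrix.trace_smul, trace_vecMulVec, smul_eq_mul]
  simp

lemma kkt [DecidableEq α] (φ : α → Fin N → ℝ) {lam : ℝ} (hlam : 0 < lam)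
    (πs : α → ℝ) (hπ0 : ∀ x, 0 ≤ πs x) (hπ1 : ∑ x, πs x = 1)
    (hopt : ∀ P : α → ℝ, (∀ x, 0 ≤ P x) → ∑ x, P x = 1 →
      Real.log (designMat φ P lam).det ≤ Real.log (designMat φ πs lam).det)
    (x0 : α) :
    φ x0 ⬝ᵥ ((designMat φ πs lam)⁻¹ *ᵥ φ x0)
      ≤ ∑ x, πs x * (φ x ⬝ᵥ ((designMat φ πs lam)⁻¹ *ᵥ φ x)) := by
  set S := designMat φ πs lam with hS
  have hSpd := designMat_posDef φ hπ0 hlam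
  have hSdet : 0 < S.det := hSpd.det_pos
  have hSinv : S * S⁻¹ = 1 := Matrix.mul_nonsing_inv _ (isUnit_iff_ne_zero.mpr hSdet.ne')
  set A := ∑ x, πs x • Matrix.vecMulVec (φ x) (φ x) with hA
  set D := Matrix.vecMulVec (φ x0) (φ x0) - A with hD
  set M := S⁻¹ * D with hM
  set g := (Matrix.det (1 + (Polynomial.X : ℝ[X]) • M.map Polynomial.C)).divX.divX with hg
  -- Step 1
  have step1 : ∀ t : ℝ, t ∈ Set.Ioc (0:ℝ) 1 → M.trace ≤ -(g.eval t * t) := by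
    intro t ht
    set Pt : α → ℝ := fun x => (1 - t) * πs x + t * (if x = x0 then 1 else 0) with hPt
    have hnn : ∀ x, 0 ≤ Pt x := by
      intro x
      have h1 : 0 ≤ (1 - t) * πs x := mul_nonneg (by linarith [ht.2]) (hπ0 x)
      have h2 : 0 ≤ t * (if x = x0 then (1:ℝ) else 0) := by
        refine mul_nonneg ht.1.le ?_
        split <;> norm_num
      simpa [hPt] using add_nonneg h1 h2
    have hsum1 : ∑ x, Pt x = 1 := by
      simp only [hPt]
      rw [Finset.sum_add_distrib, ← Finset.mul_sum, ← Finset.mul_sum, hπ1,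
        Finset.sum_ite_eq' Finset.univ x0 (fun _ => (1:ℝ))]
      simp
    have hdm : designMat φ Pt lam = S + t • D := by
      have hsplit : (∑ x, Pt x • Matrix.vecMulVec (φ x) (φ x)) =
          (1 - t) • A + t • Matrix.vecMulVec (φ x0) (φ x0) := by
        have h1 : ∀ x : α, Pt x • Matrix.vecMulVec (φ x) (φ x) =
            (1 - t) • (πs x • Matrix.vecMulVec (φ x) (φ x)) +
            (if x = x0 then t • Matrix.vecMulVec (φ x) (φ x) else 0) := by
          intro x
          by_cases hx : x = x0 <;>
            simp [hPt, hx, add_smul, mul_smul]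
        rw [Finset.sum_congr rfl fun x _ => h1 x, Finset.sum_add_distrib,
          Finset.sum_ite_eq' Finset.univ x0, hA, ← Finset.smul_sum]
        simp
      show (∑ x, Pt x • Matrix.vecMulVec (φ x) (φ x)) + lam • 1 = S + t • D
      rw [hsplit, hS, hD]
      show (1 - t) • A + t • Matrix.vecMulVec (φ x0) (φ x0) + lam • (1 : Matrix (Fin N) (Fin N) ℝ)
        = (A + lam • 1) + t • (Matrix.vecMulVec (φ x0) (φ x0) - A)
      module
    have hle := hopt Pt hnn hsum1
    rw [hdm] at hle
    have hPDt : (0:ℝ) < (S + t • D).det := by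
      rw [← hdm]; exact (designMat_posDef φ hnn hlam).det_pos
    have hdet : (S + t • D).det ≤ S.det := (Real.log_le_log_iff hPDt hSdet).mp hle
    have hfact : S + t • D = S * (1 + t • M) := by
      rw [mul_add, mul_one, mul_smul_comm, hM, ← Matrix.mul_assoc, hSinv, one_mul]
    rw [hfact, Matrix.det_mul] at hdet
    have hdet1 : (1 + t • M).det ≤ 1 := by
      have := (mul_le_iff_le_one_right hSdet).mp hdet
      exact this
    rw [Matrix.det_one_add_smul t M] at hdet1
    have hmain : (M.trace + g.eval t * t) * t ≤ 0 * t := by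
      ring_nf
      ring_nf at hdet1
      nlinarith [hdet1]
    have := (mul_le_mul_iff_left₀ ht.1).mp hmain
    linarith
  -- Step 2
  have step2 : M.trace ≤ 0 := by
    have hcont : Filter.Tendsto (fun t : ℝ => -(g.eval t * t)) (nhdsWithin 0 (Set.Ioi 0))
        (nhds 0) := by
      have hc : Continuous fun t : ℝ => -(Polynomial.eval t g * t) :=
        ((g.continuous).mul continuous_id).neg
      have h0 : -(Polynomial.eval (0:ℝ) g * 0) = 0 := by ring
      have := (hc.tendsto 0).mono_left (nhdsWithin_le_nhds (s := Set.Ioi (0:ℝ)))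
      rwa [h0] at this
    refine ge_of_tendsto hcont ?_
    filter_upwards [Ioc_mem_nhdsGT_of_mem (Set.left_mem_Ico.mpr one_pos)] with t ht
    exact step1 t ht
  -- Step 3
  have step3 : M.trace = φ x0 ⬝ᵥ (S⁻¹ *ᵥ φ x0) - ∑ x, πs x * (φ x ⬝ᵥ (S⁻¹ *ᵥ φ x)) := by
    rw [hM, hD, mul_sub, Matrix.trace_sub, trace_mul_vecMulVec]
    congr 1
    rw [hA, Finset.mul_sum]
    rw [Matrix.trace_sum]
    exact Finset.sum_congr rfl fun x _ => by
      rw [mul_smul_comm, Matrix.trace_smul, trace_mul_vecMulVec, smul_eq_mul]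
  linarith [step2, step3.symm.le]


lemma kkt_section_end : True := trivial

end Stmt4Aux

open Stmt4Aux in
theorem stmt4 {α : Type*} [Fintype α] {N : ℕ} (φ : α → Fin N → ℝ)
    (σ T lam : ℝ) (hσ : 0 < σ) (hT : 0 < T) (hlam : lam = σ / T)
    (πs : α → ℝ) (hπ0 : ∀ x, 0 ≤ πs x) (hπ1 : ∑ x, πs x = 1)
    (hopt : ∀ P : α → ℝ, (∀ x, 0 ≤ P x) → ∑ x, P x = 1 →
      Real.log (designMat φ P lam).det ≤ Real.log (designMat φ πs lam).det) :
    (∀ x, φ x ⬝ᵥ ((designMat φ πs lam)⁻¹ *ᵥ φ x)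
        ≤ sSup {v : ℝ | ∃ P : α → ℝ, (∀ x, 0 ≤ P x) ∧ ∑ x, P x = 1 ∧
            v = ∑ x, P x * (φ x ⬝ᵥ ((designMat φ P lam)⁻¹ *ᵥ φ x))}) ∧
    (∀ x, φ x ⬝ᵥ ((designMat φ πs lam)⁻¹ *ᵥ φ x)
        ≤ sSup {v : ℝ | ∃ P : α → ℝ, (∀ x, 0 ≤ P x) ∧ ∑ x, P x = 1 ∧
            v = Real.log (designMat φ (fun x => (T / σ) * P x) 1).det}) := by
  classical
  have hlam0 : 0 < lam := hlam ▸ div_pos hσ hT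
  have key := kkt φ hlam0 πs hπ0 hπ1 hopt
  constructor
  · intro x0
    refine le_trans (key x0) (le_csSup ?_ ?_)
    · refine ⟨(N:ℝ), ?_⟩
      rintro v ⟨P, hP0, hP1, rfl⟩
      rw [sum_mul_quad φ hP0 hlam0]
      have htr := posSemidef_trace_nonneg ((designMat_posDef φ hP0 hlam0).inv).posSemidef
      have := mul_nonneg hlam0.le htr
      linarith
    · exact ⟨πs, hπ0, hπ1, rfl⟩
  · intro x0
    have hTσ : (T/σ) = lam⁻¹ := by rw [hlam, inv_div]
    have hTσ0 : 0 ≤ T/σ := div_nonneg hT.le hσ.le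
    have hscaled : ∀ P : α → ℝ,
        designMat φ (fun x => (T/σ) * P x) 1 = lam⁻¹ • designMat φ P lam := by
      intro P
      rw [hTσ]
      exact designMat_scaled φ P hlam0
    have hMpd : (lam⁻¹ • designMat φ πs lam).PosDef := by
      rw [← hscaled πs]
      exact designMat_posDef φ (fun x => mul_nonneg hTσ0 (hπ0 x)) one_pos
    have hSpd := designMat_posDef φ hπ0 hlam0
    have hSinv : designMat φ πs lam * (designMat φ πs lam)⁻¹ = 1 :=
      Matrix.mul_nonsing_inv _ (isUnit_iff_ne_zero.mpr hSpd.det_pos.ne')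
    have hinvM : (lam⁻¹ • designMat φ πs lam)⁻¹ = lam • (designMat φ πs lam)⁻¹ := by
      apply Matrix.inv_eq_right_inv
      rw [smul_mul_assoc, mul_smul_comm, hSinv, smul_smul, inv_mul_cancel₀ hlam0.ne', one_smul]
    have h2 : ∑ x, πs x * (φ x ⬝ᵥ ((designMat φ πs lam)⁻¹ *ᵥ φ x)) ≤
        Real.log (designMat φ (fun x => (T/σ) * πs x) 1).det := by
      rw [sum_mul_quad φ hπ0 hlam0, hscaled πs]
      have hlog := card_sub_trace_inv_le_log_det hMpd
      rw [hinvM, Matrix.trace_smul, smul_eq_mul] at hlog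
      linarith
    refine le_trans (key x0) (le_trans h2 (le_csSup ?_ ?_))
    · refine ⟨(T/σ) * ∑ x, (φ x ⬝ᵥ φ x), ?_⟩
      rintro v ⟨P, hP0, hP1, rfl⟩
      have hwnn : ∀ x, 0 ≤ (T/σ) * P x := fun x => mul_nonneg hTσ0 (hP0 x)
      have hpd : (designMat φ (fun x => (T/σ)*P x) 1).PosDef := designMat_posDef φ hwnn one_pos
      have h1 := log_det_le_trace_sub hpd
      rw [trace_designMat] at h1
      have hb : ∑ x, (T/σ) * P x * (φ x ⬝ᵥ φ x) ≤ (T/σ) * ∑ x, (φ x ⬝ᵥ φ x) := by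
        rw [Finset.mul_sum]
        refine Finset.sum_le_sum fun x _ => ?_
        have hc : 0 ≤ φ x ⬝ᵥ φ x := Finset.sum_nonneg fun i _ => mul_self_nonneg _
        have hPle : P x ≤ 1 := hP1 ▸ Finset.single_le_sum (fun y _ => hP0 y) (Finset.mem_univ x)
        calc (T/σ) * P x * (φ x ⬝ᵥ φ x) = (T/σ) * (P x * (φ x ⬝ᵥ φ x)) := by ring
          _ ≤ (T/σ) * (φ x ⬝ᵥ φ x) :=
              mul_le_mul_of_nonneg_left (mul_le_of_le_one_left hc hPle) hTσ0
      linarith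
    · exact ⟨πs, hπ0, hπ1, rfl⟩
end

section
/- Let P* minimize J(P) = Σ_x P(x) Δ̂(x) - (2/β) log det S(P, λ) over probability distributions on a finite set X, where Δ̂(x) ≥ 0 for all x, Δ̂(x̂) = 0 for some x̂, and S(P,λ) = Σ_x P(x)φ(x)φ(x)ᵀ + λI with λ > 0, β > 0. Then (i) Σ_x P*(x) Δ̂(x) ≤ (2/β) Σ_x P*(x) ‖φ(x)‖²_{S(P*,λ)^{-1}}, and (ii) for every x ∈ X: ‖φ(x)‖²_{S(P*,λ)^{-1}} ≤ (β/2) Δ̂(x) + Σ_{x'} P*(x') ‖φ(x')‖²_{S(P*,λ)^{-1}}. -/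
open Matrix

/- Auxiliary lemmas -/

lemma aux_trace_mul_vmv {N : ℕ} (B : Matrix (Fin N) (Fin N) ℝ) (u : Fin N → ℝ) :
    trace (B * vecMulVec u u) = u ⬝ᵥ (B *ᵥ u) := by
  simp only [Matrix.trace, Matrix.diag, Matrix.mul_apply, vecMulVec_apply, dotProduct, mulVec,
    Finset.mul_sum]
  refine Finset.sum_congr rfl fun i _ => Finset.sum_congr rfl fun j _ => by ring

lemma aux_vmv_mulVec {N : ℕ} (u v : Fin N → ℝ) : vecMulVec u u *ᵥ v = (u ⬝ᵥ v) • u := by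
  ext i
  simp only [vecMulVec_apply, mulVec, dotProduct, Pi.smul_apply, smul_eq_mul, Finset.sum_mul]
  exact Finset.sum_congr rfl fun j _ => by ring

lemma aux_sum_mulVec {α : Type*} [Fintype α] {N : ℕ} (M : α → Matrix (Fin N) (Fin N) ℝ)
    (v : Fin N → ℝ) : (∑ x, M x) *ᵥ v = ∑ x, M x *ᵥ v := by
  ext i
  simp only [mulVec, dotProduct, Finset.sum_apply, Matrix.sum_apply, Finset.sum_mul]
  exact Finset.sum_comm

lemma aux_designMat_posDef {α : Type*} [Fintype α] {N : ℕ} (φ : α → Fin N → ℝ)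
    (Q : α → ℝ) (hQ : ∀ x, 0 ≤ Q x) (lam : ℝ) (hlam : 0 < lam) :
    (designMat φ Q lam).PosDef := by
  rw [posDef_iff_dotProduct_mulVec]
  constructor
  · show (designMat φ Q lam)ᴴ = designMat φ Q lam
    ext i j
    simp only [designMat, conjTranspose_apply, Matrix.add_apply, Matrix.sum_apply,
      Matrix.smul_apply, vecMulVec_apply, Matrix.one_apply, smul_eq_mul, star_trivial]
    congr 1
    · exact Finset.sum_congr rfl fun y _ => by ring
    · by_cases h : j = i
      · simp [h]
      · rw [if_neg h, if_neg (fun h' => h h'.symm)]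
  · intro v hv
    have hstar : star v = v := funext fun i => star_trivial _
    have hmv : (designMat φ Q lam) *ᵥ v
        = ∑ x, Q x • ((φ x ⬝ᵥ v) • φ x) + lam • v := by
      unfold designMat
      rw [add_mulVec, aux_sum_mulVec, smul_mulVec, one_mulVec]
      congr 1
      refine Finset.sum_congr rfl fun x _ => ?_
      rw [smul_mulVec, aux_vmv_mulVec]
    rw [hstar, hmv, dotProduct_add]
    have hds : ∀ (w : α → Fin N → ℝ), v ⬝ᵥ ∑ x, w x = ∑ x, v ⬝ᵥ w x := by
      intro w
      simp only [dotProduct, Finset.sum_apply, Finset.mul_sum]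
      exact Finset.sum_comm
    have h1 : v ⬝ᵥ ∑ x, Q x • ((φ x ⬝ᵥ v) • φ x) = ∑ x, Q x * (φ x ⬝ᵥ v)^2 := by
      rw [hds]
      refine Finset.sum_congr rfl fun x _ => ?_
      rw [dotProduct_smul, dotProduct_smul, smul_eq_mul, smul_eq_mul, dotProduct_comm]
      ring
    have h2 : (0:ℝ) < v ⬝ᵥ lam • v := by
      rw [dotProduct_smul, smul_eq_mul]
      have hvv : 0 < v ⬝ᵥ v := by
        have hnn : 0 ≤ v ⬝ᵥ v := Finset.sum_nonneg fun i _ => mul_self_nonneg _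
        rcases hnn.lt_or_eq with h | h
        · exact h
        · exact absurd ((dotProduct_self_eq_zero).mp h.symm) hv
      positivity
    have h3 : 0 ≤ ∑ x, Q x * (φ x ⬝ᵥ v)^2 :=
      Finset.sum_nonneg fun x _ => mul_nonneg (hQ x) (sq_nonneg _)
    rw [h1]
    linarith

lemma aux_line_sum {α : Type*} [Fintype α] [DecidableEq α] (P : α → ℝ) (x : α) (t : ℝ) (g : α → ℝ) :
    ∑ y, ((1-t) * P y + t * (if y = x then 1 else 0)) * g y
      = ∑ y, P y * g y + t * (g x - ∑ y, P y * g y) := by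
  have : ∀ y, ((1-t) * P y + t * (if y = x then 1 else 0)) * g y
      = P y * g y - t * (P y * g y) + (if y = x then t * g y else 0) := by
    intro y; by_cases h : y = x <;> simp [h] <;> ring
  rw [Finset.sum_congr rfl fun y _ => this y, Finset.sum_add_distrib, Finset.sum_sub_distrib]
  have h2 : ∑ y, (if y = x then t * g y else 0) = t * g x :=
    (Finset.sum_ite_eq' Finset.univ x (fun y => t * g y)).trans (if_pos (Finset.mem_univ x))
  rw [h2, ← Finset.mul_sum]
  ring

lemma aux_designMat_line {α : Type*} [Fintype α] [DecidableEq α] {N : ℕ} (φ : α → Fin N → ℝ)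
    (P : α → ℝ) (lam : ℝ) (x : α) (t : ℝ) :
    designMat φ (fun y => (1-t) * P y + t * (if y = x then 1 else 0)) lam
      = designMat φ P lam
        + t • (vecMulVec (φ x) (φ x) - ∑ y, P y • vecMulVec (φ y) (φ y)) := by
  unfold designMat
  ext i j
  simp only [Matrix.add_apply, Matrix.sum_apply, Matrix.smul_apply, Matrix.sub_apply,
    vecMulVec_apply, smul_eq_mul]
  have := aux_line_sum P x t (fun y => φ y i * φ y j)
  simp only [← mul_assoc] at this ⊢
  rw [this]
  ring

lemma aux_hasDerivAt_det_line {N : ℕ} (A D : Matrix (Fin N) (Fin N) ℝ) (hA : IsUnit A.det) :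
    HasDerivAt (fun t : ℝ => (A + t • D).det) (A.det * trace (A⁻¹ * D)) 0 := by
  set B := A⁻¹ * D with hB
  set q : Polynomial ℝ :=
    ((1 + (Polynomial.X : Polynomial ℝ) • B.map Polynomial.C).det).divX.divX with hq
  have key : ∀ t : ℝ, (A + t • D).det = A.det * (1 + trace B * t + q.eval t * t ^ 2) := by
    intro t
    have h1 : A + t • D = A * (1 + t • B) := by
      rw [mul_add, mul_one, Matrix.mul_smul, hB, ← Matrix.mul_assoc,
        Matrix.mul_nonsing_inv A hA, Matrix.one_mul]
    rw [h1, det_mul, Matrix.det_one_add_smul t B]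
  have h1 : HasDerivAt (fun t : ℝ => q.eval t * t ^ 2)
      (Polynomial.eval 0 (Polynomial.derivative q) * 0 ^ 2 + q.eval 0 * (2 * 0 ^ 1)) 0 :=
    (q.hasDerivAt 0).mul (hasDerivAt_pow 2 0)
  have h2 : HasDerivAt (fun t : ℝ => 1 + trace B * t + q.eval t * t ^ 2) (trace B) 0 := by
    have h3 := ((hasDerivAt_const (0:ℝ) (1:ℝ)).add ((hasDerivAt_id (0:ℝ)).const_mul
      (trace B))).add h1
    refine h3.congr_deriv ?_
    ring
  have h4 := h2.const_mul A.det
  have h5 : (fun t : ℝ => (A + t • D).det)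
      = fun t => A.det * (1 + trace B * t + q.eval t * t ^ 2) := funext key
  rw [h5]
  exact h4

theorem stmt5 {α : Type*} [Fintype α] {N : ℕ} (φ : α → Fin N → ℝ)
    (Δ : α → ℝ) (hΔ : ∀ x, 0 ≤ Δ x) (xhat : α) (hxhat : Δ xhat = 0)
    (lam β : ℝ) (hlam : 0 < lam) (hβ : 0 < β)
    (P : α → ℝ) (hP0 : ∀ x, 0 ≤ P x) (hP1 : ∑ x, P x = 1)
    (hmin : ∀ Q : α → ℝ, (∀ x, 0 ≤ Q x) → ∑ x, Q x = 1 →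
      ∑ x, P x * Δ x - (2 / β) * Real.log (designMat φ P lam).det
        ≤ ∑ x, Q x * Δ x - (2 / β) * Real.log (designMat φ Q lam).det) :
    (∑ x, P x * Δ x ≤ (2 / β) * ∑ x, P x * (φ x ⬝ᵥ ((designMat φ P lam)⁻¹ *ᵥ φ x))) ∧
    (∀ x, φ x ⬝ᵥ ((designMat φ P lam)⁻¹ *ᵥ φ x)
      ≤ (β / 2) * Δ x + ∑ x', P x' * (φ x' ⬝ᵥ ((designMat φ P lam)⁻¹ *ᵥ φ x'))) := by
  classical
  set S := designMat φ P lam with hS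
  have hSpd := aux_designMat_posDef φ P hP0 lam hlam
  have hSdet : 0 < S.det := hSpd.det_pos
  set vq : α → ℝ := fun y => φ y ⬝ᵥ (S⁻¹ *ᵥ φ y) with hvq
  set a := ∑ y, P y * Δ y with ha
  set T := ∑ y, P y * vq y with hT
  have ha0 : 0 ≤ a := Finset.sum_nonneg fun y _ => mul_nonneg (hP0 y) (hΔ y)
  have hβ2 : (0:ℝ) < 2 / β := by positivity
  have key : ∀ x, (2/β) * (vq x - T) ≤ Δ x - a := by
    intro x
    set M : Matrix (Fin N) (Fin N) ℝ := ∑ y, P y • vecMulVec (φ y) (φ y) with hM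
    set D : Matrix (Fin N) (Fin N) ℝ := vecMulVec (φ x) (φ x) - M with hD
    set τ := trace (S⁻¹ * D) with hτ
    have hτeq : τ = vq x - T := by
      rw [hτ, hD, mul_sub, trace_sub, aux_trace_mul_vmv]
      congr 1
      rw [hM, Finset.mul_sum, trace_sum, hT]
      refine Finset.sum_congr rfl fun y _ => ?_
      rw [Matrix.mul_smul, trace_smul, aux_trace_mul_vmv, smul_eq_mul, hvq]
    have hline : ∀ t : ℝ,
        designMat φ (fun y => (1-t)*P y + t*(if y = x then 1 else 0)) lam = S + t • D := by
      intro t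
      rw [hS, hD, hM]
      exact aux_designMat_line φ P lam x t
    have hslope : ∀ t ∈ Set.Ioc (0:ℝ) 1,
        (Real.log (S + t • D).det - Real.log S.det) / t ≤ (β/2) * (Δ x - a) := by
      intro t ht
      have hQ0 : ∀ y, 0 ≤ (1-t)*P y + t*(if y = x then 1 else 0) := by
        intro y
        have h1 : (0:ℝ) ≤ (if y = x then (1:ℝ) else 0) := by split <;> norm_num
        have := hP0 y
        nlinarith [ht.1, ht.2]
      have hQ1 : ∑ y, ((1-t)*P y + t*(if y = x then 1 else 0)) = 1 := by
        have h := aux_line_sum P x t (fun _ => 1)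
        simpa [hP1] using h
      have hm := hmin _ hQ0 hQ1
      rw [hline t] at hm
      have hΔsum : ∑ y, ((1-t)*P y + t*(if y = x then 1 else 0)) * Δ y
          = a + t * (Δ x - a) := by
        have h := aux_line_sum P x t Δ
        rw [h, ha]
      rw [hΔsum] at hm
      have hlog : (2/β) * (Real.log (S + t•D).det - Real.log S.det) ≤ t * (Δ x - a) := by
        rw [mul_sub]
        linarith
      rw [div_le_iff₀ ht.1]
      have h2 := mul_le_mul_of_nonneg_left hlog (le_of_lt (by positivity : (0:ℝ) < β/2))
      rw [show (β/2) * ((2/β) * (Real.log (S + t•D).det - Real.log S.det))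
          = Real.log (S + t•D).det - Real.log S.det by field_simp] at h2
      calc Real.log (S + t•D).det - Real.log S.det ≤ (β/2) * (t * (Δ x - a)) := h2
        _ = (β/2) * (Δ x - a) * t := by ring
    have hunit : IsUnit S.det := isUnit_iff_ne_zero.mpr hSdet.ne'
    have hdet0 := aux_hasDerivAt_det_line S D hunit
    have e0 : (S + (0:ℝ) • D).det = S.det := by simp
    have hlogd : HasDerivAt (fun t : ℝ => Real.log ((S + t • D).det)) τ 0 := by
      have hlog := Real.hasDerivAt_log (x := (S + (0:ℝ) • D).det) (by rw [e0]; exact hSdet.ne')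
      have hcomp := hlog.comp 0 hdet0
      have hval : ((S + (0:ℝ) • D).det)⁻¹ * (S.det * trace (S⁻¹ * D)) = τ := by
        rw [e0, hτ]
        field_simp
      rw [← hval]
      exact hcomp
    have htend := hasDerivAt_iff_tendsto_slope.mp hlogd
    have htend' : Filter.Tendsto (slope (fun t : ℝ => Real.log ((S + t • D).det)) 0)
        (nhdsWithin 0 (Set.Ioi 0)) (nhds τ) :=
      htend.mono_left (nhdsWithin_mono 0 (fun y hy => ne_of_gt hy))
    have hτle : τ ≤ (β/2) * (Δ x - a) := by
      refine le_of_tendsto htend' ?_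
      filter_upwards [Ioc_mem_nhdsGT_of_mem (Set.mem_Ico.mpr ⟨le_refl (0:ℝ), one_pos⟩)]
        with t ht
      have := hslope t ht
      rw [slope_def_field, e0] at *
      simpa [e0] using this
    have h := mul_le_mul_of_nonneg_left hτle (le_of_lt hβ2)
    rw [show (2/β) * ((β/2) * (Δ x - a)) = Δ x - a by field_simp] at h
    rw [← hτeq]
    exact h
  have hvqnn : 0 ≤ vq xhat := by
    have h := hSpd.inv.posSemidef.dotProduct_mulVec_nonneg (φ xhat)
    rwa [show star (φ xhat) = φ xhat from funext fun i => star_trivial _] at h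
  constructor
  · have h := key xhat
    rw [hxhat] at h
    have hmul := mul_nonneg hβ2.le hvqnn
    nlinarith
  · intro x
    have h := key x
    have h2 := mul_le_mul_of_nonneg_left h (le_of_lt (by positivity : (0:ℝ) < β/2))
    rw [show (β/2) * ((2/β) * (vq x - T)) = vq x - T by field_simp] at h2
    nlinarith [mul_nonneg (le_of_lt (by positivity : (0:ℝ) < β/2)) ha0]
end

section
/- Gap drift lemma: Let r_t : X → R be a sequence of reward functions on a finite set X for t in an interval I of integers, and for a subinterval J ⊆ I define R_J(x) = (1/|J|) Σ_{t∈J} r_t(x) and Δ_J(x) = max_{x'} R_J(x') − R_J(x). Let V_I = Σ_{t=s}^{e−1} ‖r_{t+1} − r_t‖_∞ where I = [s,e]. Then for any two subintervals I₁, I₂ ⊆ I and any x ∈ X: |Δ_{I₁}(x) − Δ_{I₂}(x)| ≤ 2 V_I. -/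
/-- Average reward of action `x` over the integer interval `[a, b]`. -/
noncomputable def avgReward {α : Type*} (r : ℕ → α → ℝ) (a b : ℕ) (x : α) : ℝ :=
  (∑ t ∈ Finset.Icc a b, r t x) / (Finset.Icc a b).card

/-- Suboptimality gap of action `x` w.r.t. average rewards over `[a, b]`. -/
noncomputable def gap {α : Type*} [Fintype α] (r : ℕ → α → ℝ) (a b : ℕ) (x : α) : ℝ :=
  (⨆ x' : α, avgReward r a b x') - avgReward r a b x

/-- Total variation of the reward sequence over the interval `[s, e]`. -/
noncomputable def variation {α : Type*} [Fintype α] (r : ℕ → α → ℝ) (s e : ℕ) : ℝ :=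
  ∑ t ∈ Finset.Ico s e, ⨆ x : α, |r (t + 1) x - r t x|
open Finset
theorem stmt8 {α : Type*} [Fintype α] [Nonempty α] (r : ℕ → α → ℝ)
    (s e s₁ e₁ s₂ e₂ : ℕ)
    (hs₁ : s ≤ s₁) (h₁ : s₁ ≤ e₁) (he₁ : e₁ ≤ e)
    (hs₂ : s ≤ s₂) (h₂ : s₂ ≤ e₂) (he₂ : e₂ ≤ e) (x : α) :
    |gap r s₁ e₁ x - gap r s₂ e₂ x| ≤ 2 * variation r s e := by
  set V := variation r s e with hVdef
  have hse : s ≤ e := le_trans hs₁ (le_trans h₁ he₁)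
  have hterm : ∀ t, (0:ℝ) ≤ ⨆ y : α, |r (t+1) y - r t y| := by
    intro t
    obtain ⟨y⟩ := ‹Nonempty α›
    exact le_trans (abs_nonneg _) (le_ciSup (f := fun z : α => |r (t+1) z - r t z|) (Set.Finite.bddAbove (Set.finite_range _)) y)
  have key : ∀ a b, s ≤ a → a ≤ b → b ≤ e → ∀ y : α, |r b y - r a y| ≤ V := by
    intro a b hsa hab hbe y
    have htel : ∑ t ∈ Ico a b, (r (t+1) y - r t y) = r b y - r a y := by
      rw [Finset.sum_Ico_eq_sub _ hab, Finset.sum_range_sub (fun t => r t y),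
        Finset.sum_range_sub (fun t => r t y)]
      ring
    calc |r b y - r a y| = |∑ t ∈ Ico a b, (r (t+1) y - r t y)| := by rw [htel]
      _ ≤ ∑ t ∈ Ico a b, |r (t+1) y - r t y| := Finset.abs_sum_le_sum_abs _ _
      _ ≤ ∑ t ∈ Ico a b, ⨆ z : α, |r (t+1) z - r t z| :=
          Finset.sum_le_sum (fun t _ => le_ciSup (f := fun z : α => |r (t+1) z - r t z|) (Set.Finite.bddAbove (Set.finite_range _)) y)
      _ ≤ ∑ t ∈ Ico s e, ⨆ z : α, |r (t+1) z - r t z| :=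
          Finset.sum_le_sum_of_subset_of_nonneg
            (Finset.Ico_subset_Ico hsa hbe) (fun t _ _ => hterm t)
  have key' : ∀ t ∈ Icc s e, ∀ t' ∈ Icc s e, ∀ y : α, |r t y - r t' y| ≤ V := by
    intro t ht t' ht' y
    simp only [Finset.mem_Icc] at ht ht'
    rcases le_total t' t with h | h
    · exact key t' t ht'.1 h ht.2 y
    · rw [abs_sub_comm]; exact key t t' ht.1 h ht'.2 y
  have hJ : (Icc s e).Nonempty := Finset.nonempty_Icc.mpr hse
  set m : α → ℝ := fun y => (Icc s e).inf' hJ (fun t => r t y) with hm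
  set M : α → ℝ := fun y => (Icc s e).sup' hJ (fun t => r t y) with hM
  have hMm : ∀ y, M y - m y ≤ V := by
    intro y
    obtain ⟨t₁, ht₁, hMe⟩ := Finset.exists_mem_eq_sup' hJ (fun t => r t y)
    obtain ⟨t₀, ht₀, hme⟩ := Finset.exists_mem_eq_inf' hJ (fun t => r t y)
    have := key' t₁ ht₁ t₀ ht₀ y
    simp only [hM, hM, hm, hMe, hme]
    exact le_trans (le_abs_self _) this
  -- averages lie between m and M
  have havg : ∀ a b, s ≤ a → a ≤ b → b ≤ e → ∀ y : α,
      m y ≤ avgReward r a b y ∧ avgReward r a b y ≤ M y := by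
    intro a b hsa hab hbe y
    have hsub : Icc a b ⊆ Icc s e := Finset.Icc_subset_Icc hsa hbe
    have hcard : (0:ℝ) < (Icc a b).card := by
      have : (Icc a b).Nonempty := Finset.nonempty_Icc.mpr hab
      exact_mod_cast Finset.card_pos.mpr this
    constructor
    · rw [avgReward, le_div_iff₀ hcard]
      calc m y * (Icc a b).card = ∑ _t ∈ Icc a b, m y := by
            rw [Finset.sum_const, nsmul_eq_mul, mul_comm]
        _ ≤ ∑ t ∈ Icc a b, r t y :=
            Finset.sum_le_sum (fun t ht => Finset.inf'_le (fun t => r t y) (hsub ht))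
    · rw [avgReward, div_le_iff₀ hcard]
      calc ∑ t ∈ Icc a b, r t y ≤ ∑ _t ∈ Icc a b, M y :=
            Finset.sum_le_sum (fun t ht => Finset.le_sup' (fun t => r t y) (hsub ht))
        _ = M y * (Icc a b).card := by rw [Finset.sum_const, nsmul_eq_mul, mul_comm]
  have havgdiff : ∀ y : α, |avgReward r s₁ e₁ y - avgReward r s₂ e₂ y| ≤ V := by
    intro y
    obtain ⟨hm1, hM1⟩ := havg s₁ e₁ hs₁ h₁ he₁ y
    obtain ⟨hm2, hM2⟩ := havg s₂ e₂ hs₂ h₂ he₂ y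
    rw [abs_sub_le_iff]
    constructor <;> [skip; skip] <;>
      linarith [hMm y]
  have hbdd : BddAbove (Set.range fun x' : α => avgReward r s₁ e₁ x') :=
    Set.Finite.bddAbove (Set.finite_range _)
  have hbdd2 : BddAbove (Set.range fun x' : α => avgReward r s₂ e₂ x') :=
    Set.Finite.bddAbove (Set.finite_range _)
  have hsup : |(⨆ x' : α, avgReward r s₁ e₁ x') - (⨆ x' : α, avgReward r s₂ e₂ x')| ≤ V := by
    rw [abs_sub_le_iff]
    constructor
    · rw [sub_le_iff_le_add]
      refine ciSup_le fun y => ?_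
      have h1 : avgReward r s₁ e₁ y ≤ avgReward r s₂ e₂ y + V := by
        have := havgdiff y; rw [abs_sub_le_iff] at this; linarith [this.1]
      have h2 := le_ciSup hbdd2 y
      linarith
    · rw [sub_le_iff_le_add]
      refine ciSup_le fun y => ?_
      have h1 : avgReward r s₂ e₂ y ≤ avgReward r s₁ e₁ y + V := by
        have := havgdiff y; rw [abs_sub_le_iff] at this; linarith [this.2]
      have h2 := le_ciSup hbdd y
      linarith
  have hx := havgdiff x
  rw [gap, gap]
  rw [abs_sub_le_iff] at hsup hx ⊢
  constructor <;> linarith [hsup.1, hsup.2, hx.1, hx.2]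
end

section
/- Greedy partition count bound via variation: Suppose an integer interval J is partitioned into consecutive intervals J_1, …, J_ℓ such that for each k < ℓ, V_{J_k} > c(|J_k| + 1)^{−1/2} for some constant c > 0, where V_{J_k} is the total variation of the rewards over J_k. Then ℓ − 1 ≤ (c/√2)^{−2/3} · V_J^{2/3} · |J|^{1/3}, where V_J ≥ Σ_{k<ℓ} V_{J_k}. -/
theorem stmt10 (ℓ : ℕ) (n : ℕ → ℕ) (V : ℕ → ℝ) (c VJ : ℝ) (NJ : ℕ)
    (hc : 0 < c) (hV : ∀ k, 0 ≤ V k) (hn : ∀ k, 1 ≤ n k)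
    (hgreedy : ∀ k ∈ Finset.range (ℓ - 1),
      c * ((n k : ℝ) + 1) ^ (-(1 : ℝ) / 2) < V k)
    (hVsum : ∑ k ∈ Finset.range (ℓ - 1), V k ≤ VJ)
    (hnsum : ∑ k ∈ Finset.range (ℓ - 1), n k ≤ NJ) :
    ((ℓ : ℝ) - 1) ≤ (c / Real.sqrt 2) ^ (-(2 : ℝ) / 3)
      * VJ ^ ((2 : ℝ) / 3) * (NJ : ℝ) ^ ((1 : ℝ) / 3) := by
  have hVJ : 0 ≤ VJ := le_trans (Finset.sum_nonneg fun k _ => hV k) hVsum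
  have hs2 : (0:ℝ) < Real.sqrt 2 := Real.sqrt_pos.mpr (by norm_num)
  have hcs : (0:ℝ) < c / Real.sqrt 2 := div_pos hc hs2
  rcases Nat.lt_or_ge ℓ 2 with hℓ | hℓ
  · have : (ℓ:ℝ) - 1 ≤ 0 := by
      interval_cases ℓ <;> norm_num
    refine this.trans ?_
    positivity
  -- main case
  set m := ℓ - 1 with hm
  have hm1 : 1 ≤ m := by omega
  have hℓm : (ℓ:ℝ) - 1 = (m:ℝ) := by
    have : ℓ = m + 1 := by omega
    rw [this]; push_cast; ring
  rw [hℓm]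
  -- step A : pointwise bound
  have stepA : ∀ k ∈ Finset.range m, ((n k:ℝ)) ^ (-(1:ℝ)/2) ≤ Real.sqrt 2 / c * V k := by
    intro k hk
    have hnk : (1:ℝ) ≤ (n k:ℝ) := by exact_mod_cast hn k
    have hnkpos : (0:ℝ) < (n k:ℝ) := lt_of_lt_of_le one_pos hnk
    have h1 : ((n k:ℝ) + 1) ≤ 2 * (n k:ℝ) := by linarith
    have h2 : (2 * (n k:ℝ)) ^ (-(1:ℝ)/2) ≤ ((n k:ℝ) + 1) ^ (-(1:ℝ)/2) :=
      Real.rpow_le_rpow_of_nonpos (by linarith) h1 (by norm_num)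
    have h3 : (2 * (n k:ℝ)) ^ (-(1:ℝ)/2)
        = (2:ℝ) ^ (-(1:ℝ)/2) * (n k:ℝ) ^ (-(1:ℝ)/2) :=
      Real.mul_rpow (by norm_num) hnkpos.le
    have h4 : (2:ℝ) ^ (-(1:ℝ)/2) = (Real.sqrt 2)⁻¹ := by
      rw [Real.sqrt_eq_rpow, ← Real.rpow_neg (by norm_num)]
      norm_num
    have h5 := hgreedy k hk
    -- (n k)^(-1/2) = √2 * (2 n k)^(-1/2) ≤ √2 * (n k + 1)^(-1/2) < √2/c * V k
    have h6 : (n k:ℝ) ^ (-(1:ℝ)/2) ≤ Real.sqrt 2 * ((n k:ℝ) + 1) ^ (-(1:ℝ)/2) := by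
      have := mul_le_mul_of_nonneg_left h2 hs2.le
      rw [h3, h4, ← mul_assoc, mul_inv_cancel₀ hs2.ne', one_mul] at this
      exact this
    have h7 : Real.sqrt 2 * ((n k:ℝ) + 1) ^ (-(1:ℝ)/2) ≤ Real.sqrt 2 / c * V k := by
      rw [div_mul_eq_mul_div, le_div_iff₀ hc]
      calc Real.sqrt 2 * ((n k:ℝ) + 1) ^ (-(1:ℝ)/2) * c
          = Real.sqrt 2 * (c * ((n k:ℝ) + 1) ^ (-(1:ℝ)/2)) := by ring
        _ ≤ Real.sqrt 2 * V k := by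
            exact mul_le_mul_of_nonneg_left h5.le hs2.le
    exact h6.trans h7
  -- step B : Hölder
  have hB : (m:ℝ) ≤ (∑ k ∈ Finset.range m, (n k:ℝ) ^ (-(1:ℝ)/2)) ^ ((2:ℝ)/3)
      * (∑ k ∈ Finset.range m, (n k:ℝ)) ^ ((1:ℝ)/3) := by
    have hpq : Real.HolderConjugate (3/2) 3 := by constructor <;> norm_num
    have := Real.inner_le_Lp_mul_Lq_of_nonneg (s := Finset.range m)
      (f := fun k => (n k:ℝ) ^ (-(1:ℝ)/3)) (g := fun k => (n k:ℝ) ^ ((1:ℝ)/3)) hpq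
      (fun i _ => Real.rpow_nonneg (Nat.cast_nonneg _) _)
      (fun i _ => Real.rpow_nonneg (Nat.cast_nonneg _) _)
    have e1 : ∀ k ∈ Finset.range m,
        (n k:ℝ) ^ (-(1:ℝ)/3) * (n k:ℝ) ^ ((1:ℝ)/3) = 1 := by
      intro k _
      have hnkpos : (0:ℝ) < (n k:ℝ) := by exact_mod_cast Nat.lt_of_lt_of_le Nat.zero_lt_one (hn k)
      rw [← Real.rpow_add hnkpos]
      norm_num
    have e2 : ∀ k ∈ Finset.range m,
        ((n k:ℝ) ^ (-(1:ℝ)/3)) ^ ((3:ℝ)/2) = (n k:ℝ) ^ (-(1:ℝ)/2) := by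
      intro k _
      rw [← Real.rpow_mul (Nat.cast_nonneg _)]
      norm_num
    have e3 : ∀ k ∈ Finset.range m,
        ((n k:ℝ) ^ ((1:ℝ)/3)) ^ (3:ℝ) = (n k:ℝ) := by
      intro k _
      rw [← Real.rpow_mul (Nat.cast_nonneg _)]; norm_num
    rw [Finset.sum_congr rfl e1, Finset.sum_congr rfl e2, Finset.sum_congr rfl e3] at this
    simpa using this
  -- combine
  have hsumA : ∑ k ∈ Finset.range m, (n k:ℝ) ^ (-(1:ℝ)/2) ≤ Real.sqrt 2 / c * VJ := by
    calc ∑ k ∈ Finset.range m, (n k:ℝ) ^ (-(1:ℝ)/2)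
        ≤ ∑ k ∈ Finset.range m, Real.sqrt 2 / c * V k := Finset.sum_le_sum stepA
      _ = Real.sqrt 2 / c * ∑ k ∈ Finset.range m, V k := by rw [Finset.mul_sum]
      _ ≤ Real.sqrt 2 / c * VJ := by
          exact mul_le_mul_of_nonneg_left hVsum (div_pos hs2 hc).le
  have hsumN : ∑ k ∈ Finset.range m, (n k:ℝ) ≤ (NJ:ℝ) := by
    exact_mod_cast hnsum
  have key : (m:ℝ) ≤ (Real.sqrt 2 / c * VJ) ^ ((2:ℝ)/3) * (NJ:ℝ) ^ ((1:ℝ)/3) := by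
    refine hB.trans (mul_le_mul ?_ ?_ ?_ ?_)
    · exact Real.rpow_le_rpow (Finset.sum_nonneg fun k _ =>
        Real.rpow_nonneg (Nat.cast_nonneg _) _) hsumA (by norm_num)
    · exact Real.rpow_le_rpow (Finset.sum_nonneg fun k _ => Nat.cast_nonneg _)
        hsumN (by norm_num)
    · exact Real.rpow_nonneg (Finset.sum_nonneg fun k _ => Nat.cast_nonneg _) _
    · exact Real.rpow_nonneg (mul_nonneg (div_pos hs2 hc).le hVJ) _
  refine key.trans (le_of_eq ?_)
  rw [Real.mul_rpow (div_pos hs2 hc).le hVJ]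
  congr 1
  congr 1
  rw [show (-(2:ℝ)/3) = -((2:ℝ)/3) by ring, Real.rpow_neg hcs.le,
    ← Real.inv_rpow hcs.le, inv_div]
end

section
/- IPS estimator variance bound: In the setting of the IPS bias bound, assume additionally |y_t| ≤ 1 almost surely. Then Var(R̂(x)) ≤ ‖φ(x)‖²_{S_φ(P, σ/T)^{-1}} for every x ∈ X. -/
open Matrix MeasureTheory

lemma vecMulVec_mulVec' {N : ℕ} (w v z : Fin N → ℝ) :
    Matrix.vecMulVec w v *ᵥ z = (v ⬝ᵥ z) • w := by
  funext i
  simp only [Matrix.mulVec, dotProduct, Matrix.vecMulVec_apply, Pi.smul_apply,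
    smul_eq_mul, Finset.sum_mul]
  exact Finset.sum_congr rfl fun j _ => by ring

lemma sum_mulVec' {α N : Type*} [Fintype α] [Fintype N] (M : α → Matrix N N ℝ) (z : N → ℝ) :
    (∑ a, M a) *ᵥ z = ∑ a, M a *ᵥ z := by
  funext i
  simp only [Matrix.mulVec, dotProduct, Finset.sum_apply, Finset.sum_mul, Matrix.sum_apply]
  rw [Finset.sum_comm]

lemma dotProduct_sum' {α N : Type*} [Fintype α] [Fintype N] (z : N → ℝ) (f : α → N → ℝ) :
    z ⬝ᵥ (∑ a, f a) = ∑ a, z ⬝ᵥ f a := by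
  simp only [dotProduct, Finset.sum_apply, Finset.mul_sum]
  exact Finset.sum_comm

lemma designMat_quad {α : Type*} [Fintype α] {N : ℕ} (φ : α → Fin N → ℝ)
    (P : α → ℝ) (lam : ℝ) (z : Fin N → ℝ) :
    z ⬝ᵥ (designMat φ P lam *ᵥ z) = (∑ a, P a * (φ a ⬝ᵥ z) ^ 2) + lam * (z ⬝ᵥ z) := by
  simp only [designMat, Matrix.add_mulVec, sum_mulVec', Matrix.smul_mulVec,
    vecMulVec_mulVec', dotProduct_add, dotProduct_sum', dotProduct_smul,
    Matrix.one_mulVec, smul_eq_mul, smul_smul]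
  congr 1
  refine Finset.sum_congr rfl fun a _ => ?_
  rw [dotProduct_comm z (φ a)]
  ring

lemma designMat_posDef {α : Type*} [Fintype α] {N : ℕ} (φ : α → Fin N → ℝ)
    (P : α → ℝ) (hP0 : ∀ a, 0 ≤ P a) {lam : ℝ} (hlam : 0 < lam) :
    (designMat φ P lam).PosDef := by
  rw [Matrix.posDef_iff_dotProduct_mulVec]
  constructor
  · refine Matrix.IsHermitian.add (?_) ?_
    · show _ = _
      ext i j
      simp only [Matrix.conjTranspose_apply, Matrix.sum_apply, Matrix.smul_apply,
        Matrix.vecMulVec_apply, star_trivial, smul_eq_mul]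
      exact Finset.sum_congr rfl fun a _ => by ring
    · ext i j
      simp only [Matrix.conjTranspose_apply, Matrix.smul_apply, Matrix.one_apply, star_trivial,
        smul_eq_mul]
      by_cases h : i = j <;> simp [h, eq_comm]
  · intro z hz
    rw [star_trivial, designMat_quad]
    have h1 : 0 ≤ ∑ a, P a * (φ a ⬝ᵥ z) ^ 2 :=
      Finset.sum_nonneg fun a _ => mul_nonneg (hP0 a) (sq_nonneg _)
    have h2 : 0 < z ⬝ᵥ z := by
      have := dotProduct_self_star_pos_iff (v := z)
      simp only [star_trivial] at this
      exact this.mpr hz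
    positivity

lemma designMat_inv_quad_bound {α : Type*} [Fintype α] {N : ℕ} (φ : α → Fin N → ℝ)
    (P : α → ℝ) (hP0 : ∀ a, 0 ≤ P a) {lam : ℝ} (hlam : 0 < lam) (x : α) :
    ∑ a, P a * (φ x ⬝ᵥ ((designMat φ P lam)⁻¹ *ᵥ φ a)) ^ 2
      ≤ φ x ⬝ᵥ ((designMat φ P lam)⁻¹ *ᵥ φ x) := by
  set S := designMat φ P lam with hS
  have hPD : S.PosDef := designMat_posDef φ P hP0 hlam
  have hdet : IsUnit S.det := hPD.det_pos.ne'.isUnit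
  have hAsymm : (S⁻¹)ᵀ = S⁻¹ := by
    have h := hPD.isHermitian.inv
    simpa [Matrix.IsHermitian, Matrix.conjTranspose_eq_transpose_of_trivial] using h
  set u : Fin N → ℝ := S⁻¹ *ᵥ φ x with hu
  have hrw : ∀ a, φ x ⬝ᵥ (S⁻¹ *ᵥ φ a) = u ⬝ᵥ φ a := by
    intro a
    rw [Matrix.dotProduct_mulVec, ← Matrix.mulVec_transpose, hAsymm]
  have key : ∑ a, P a * (u ⬝ᵥ φ a) ^ 2 ≤ u ⬝ᵥ (S *ᵥ u) := by
    rw [designMat_quad]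
    have h1 : ∑ a, P a * (u ⬝ᵥ φ a) ^ 2 = ∑ a, P a * (φ a ⬝ᵥ u) ^ 2 := by
      refine Finset.sum_congr rfl fun a _ => by rw [dotProduct_comm]
    rw [h1]
    have : 0 ≤ lam * (u ⬝ᵥ u) :=
      mul_nonneg hlam.le (by simpa using dotProduct_self_star_nonneg u)
    linarith
  have hSu : S *ᵥ u = φ x := by
    rw [hu, Matrix.mulVec_mulVec, Matrix.mul_nonsing_inv S hdet, Matrix.one_mulVec]
  calc ∑ a, P a * (φ x ⬝ᵥ (S⁻¹ *ᵥ φ a)) ^ 2 = ∑ a, P a * (u ⬝ᵥ φ a) ^ 2 := by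
        exact Finset.sum_congr rfl fun a _ => by rw [hrw]
    _ ≤ u ⬝ᵥ (S *ᵥ u) := key
    _ = φ x ⬝ᵥ (S⁻¹ *ᵥ φ x) := by rw [hSu, dotProduct_comm]

lemma designMat_inv_quad_nonneg {α : Type*} [Fintype α] {N : ℕ} (φ : α → Fin N → ℝ)
    (P : α → ℝ) (hP0 : ∀ a, 0 ≤ P a) {lam : ℝ} (hlam : 0 < lam) (x : α) :
    0 ≤ φ x ⬝ᵥ ((designMat φ P lam)⁻¹ *ᵥ φ x) := by
  have hPD := (designMat_posDef φ P hP0 hlam).inv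
  simpa using hPD.posSemidef.dotProduct_mulVec_nonneg (φ x)

theorem stmt16 {α : Type*} [Fintype α] [MeasurableSpace α] [MeasurableSingletonClass α]
    {N : ℕ} (φ : α → Fin N → ℝ)
    (σ T : ℝ) (hσ : 0 < σ) (hT : 0 < T)
    (P : α → ℝ) (hP0 : ∀ a, 0 ≤ P a) (hP1 : ∑ a, P a = 1)
    {Ω : Type*} [MeasurableSpace Ω] (μ : Measure Ω) [IsProbabilityMeasure μ]
    (xt : Ω → α) (hxt : Measurable xt)
    (hdist : ∀ a, (μ (xt ⁻¹' {a})).toReal = P a)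
    (y : Ω → ℝ) (hy : ∀ᵐ ω ∂μ, |y ω| ≤ 1) (x : α) :
    (∫ ω, ((φ x ⬝ᵥ ((designMat φ P (σ / T))⁻¹ *ᵥ φ (xt ω))) * y ω) ^ 2 ∂μ)
        - (∫ ω, (φ x ⬝ᵥ ((designMat φ P (σ / T))⁻¹ *ᵥ φ (xt ω))) * y ω ∂μ) ^ 2
      ≤ φ x ⬝ᵥ ((designMat φ P (σ / T))⁻¹ *ᵥ φ x) := by
  have hlam : 0 < σ / T := div_pos hσ hT
  set v : α → ℝ := fun a => φ x ⬝ᵥ ((designMat φ P (σ / T))⁻¹ *ᵥ φ a) with hv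
  have hRnn : 0 ≤ φ x ⬝ᵥ ((designMat φ P (σ / T))⁻¹ *ᵥ φ x) :=
    designMat_inv_quad_nonneg φ P hP0 hlam x
  by_cases hZ2 : Integrable (fun ω => (v (xt ω) * y ω) ^ 2) μ
  · -- main case
    set C : ℝ := ∑ a, (v a) ^ 2 with hC
    have hvb : ∀ a, (v a) ^ 2 ≤ C := fun a =>
      Finset.single_le_sum (fun b _ => sq_nonneg (v b)) (Finset.mem_univ a)
    have hm : Measurable fun ω => v (xt ω) := (measurable_of_countable v).comp hxt
    have hint1 : Integrable (fun ω => (v (xt ω)) ^ 2) μ := by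
      refine (integrable_const C).mono' ((hm.pow_const 2).aestronglyMeasurable) ?_
      filter_upwards with ω
      rw [Real.norm_eq_abs, abs_of_nonneg (sq_nonneg _)]
      exact hvb (xt ω)
    have hmono : ∫ ω, (v (xt ω) * y ω) ^ 2 ∂μ ≤ ∫ ω, (v (xt ω)) ^ 2 ∂μ := by
      refine integral_mono_ae hZ2 hint1 ?_
      filter_upwards [hy] with ω hω
      have hy2 : (y ω) ^ 2 ≤ 1 := (sq_le_one_iff_abs_le_one _).mpr hω
      calc (v (xt ω) * y ω) ^ 2 = (v (xt ω)) ^ 2 * (y ω) ^ 2 := by ring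
        _ ≤ (v (xt ω)) ^ 2 * 1 := mul_le_mul_of_nonneg_left hy2 (sq_nonneg _)
        _ = (v (xt ω)) ^ 2 := mul_one _
    have hmap : ∫ ω, (v (xt ω)) ^ 2 ∂μ = ∑ a, P a * (v a) ^ 2 := by
      have hae : AEMeasurable xt μ := hxt.aemeasurable
      rw [← integral_map hae ((measurable_of_countable
        (fun a => (v a) ^ 2)).aestronglyMeasurable)]
      have : IsFiniteMeasure (μ.map xt) := Measure.isFiniteMeasure_map μ xt
      rw [integral_fintype (Integrable.of_finite)]
      refine Finset.sum_congr rfl fun a _ => ?_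
      rw [measureReal_def, Measure.map_apply hxt (measurableSet_singleton a), hdist a, smul_eq_mul]
    have hfinal : ∑ a, P a * (v a) ^ 2
        ≤ φ x ⬝ᵥ ((designMat φ P (σ / T))⁻¹ *ᵥ φ x) :=
      designMat_inv_quad_bound φ P hP0 hlam x
    have h0 : (∫ ω, v (xt ω) * y ω ∂μ) ^ 2 ≥ 0 := sq_nonneg _
    calc (∫ ω, (v (xt ω) * y ω) ^ 2 ∂μ) - (∫ ω, v (xt ω) * y ω ∂μ) ^ 2
        ≤ ∫ ω, (v (xt ω) * y ω) ^ 2 ∂μ := sub_le_self _ h0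
      _ ≤ ∫ ω, (v (xt ω)) ^ 2 ∂μ := hmono
      _ = ∑ a, P a * (v a) ^ 2 := hmap
      _ ≤ _ := hfinal
  · rw [integral_undef hZ2]
    have : 0 - (∫ ω, v (xt ω) * y ω ∂μ) ^ 2 ≤ 0 := by
      simp [sq_nonneg]
    linarith
end
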